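/- Exponential diversity loss in branching length: in the product geometric model, let m = |{t ∈ {1,…,d} : v_t ≥ 2}|, let N ≥ 2 be an integer with v_t ≤ N for all t, let ε ∈ (0,1), and set c = min_{2 ≤ v ≤ N} Δ_v(ln(1/ε)). Then c > 0, and if P(V) ≥ 1 − ε then Div(P) ≤ exp(−m·c). -/

import Mathlib

open Finset

/-- The tilted distribution `p_{v,a}` on `{0,…,v−1}`:
`p_{v,a}(i) = exp(−a·i/v) / ∑_{j<v} exp(−a·j/v)`. -/
noncomputable def tiltedPMF (v : ℕ) (a : ℝ) (i : ℕ) : ℝ :=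
  Real.exp (-a * i / v) / ∑ j ∈ Finset.range v, Real.exp (-a * j / v)

/-- Shannon entropy (natural log) of the tilted distribution. -/
noncomputable def tiltedEntropy (v : ℕ) (a : ℝ) : ℝ :=
  -∑ i ∈ Finset.range v, tiltedPMF v a i * Real.log (tiltedPMF v a i)

/-- Entropy loss `Δ_v(a) = ln v − H_v(a)` relative to the uniform distribution. -/
noncomputable def entropyLoss (v : ℕ) (a : ℝ) : ℝ :=
  Real.log v - tiltedEntropy v a

/-- Product geometric distribution on `ℕ^d`: `P(y) = ∏_t (1−q_t)·q_t^{y_t}`. -/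
noncomputable def geomProd {d : ℕ} (q : Fin d → ℝ) (y : Fin d → ℕ) : ℝ :=
  ∏ t, (1 - q t) * q t ^ (y t)

/-- The valid set `V = {y ∈ ℕ^d : y_t < v_t for every t}` as a finite set. -/
def validSet {d : ℕ} (v : Fin d → ℕ) : Finset (Fin d → ℕ) :=
  Fintype.piFinset fun t => Finset.range (v t)

/-- Total probability mass `P(V)` of the valid set. -/
noncomputable def validMass {d : ℕ} (q : Fin d → ℝ) (v : Fin d → ℕ) : ℝ :=
  ∑ y ∈ validSet v, geomProd q y

/-- Shannon entropy of the conditional distribution `P(·|V)`. -/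
noncomputable def condEntropy {d : ℕ} (q : Fin d → ℝ) (v : Fin d → ℕ) : ℝ :=
  -∑ y ∈ validSet v,
      (geomProd q y / validMass q v) * Real.log (geomProd q y / validMass q v)

/-- Diversity `Div(P) = exp(H(P(·|V))) / |V|`. -/
noncomputable def diversity {d : ℕ} (q : Fin d → ℝ) (v : Fin d → ℕ) : ℝ :=
  Real.exp (condEntropy q v) / (validSet v).card



/-!
Conditioned on `V`, the coordinates are independent truncated geometric laws, and the `t`-th one
is exactly the tilted distribution `p_{v_t, a_t}` with `a_t = -v_t ln q_t`; hence
`ln Div(P) = -∑_t Δ_{v_t}(a_t)`. Since `P(V) = ∏_t (1 - q_t^{v_t}) ≥ 1 - ε`, every factor gives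
`q_t^{v_t} ≤ ε`, i.e. `a_t ≥ ln(1/ε)`. Finally `Δ_v` is nondecreasing on `[0, ∞)`, nonnegative, and
positive away from `a = 0` when `v ≥ 2` (all by Gibbs' inequality), so every coordinate with
`v_t ≥ 2` loses at least `c`.
-/

open Real

section Gibbs

variable {ι : Type*} {s : Finset ι} {p q : ι → ℝ}

lemma mul_log_sub_mul_log_le {x y : ℝ} (hx : 0 < x) (hy : 0 < y) :
    x * log y - x * log x ≤ y - x := by
  have h := mul_le_mul_of_nonneg_left (log_le_sub_one_of_pos (div_pos hy hx)) hx.le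
  rwa [log_div hy.ne' hx.ne', mul_sub, mul_sub, mul_div_cancel₀ _ hx.ne', mul_one] at h

lemma mul_log_sub_mul_log_lt {x y : ℝ} (hx : 0 < x) (hy : 0 < y) (hxy : x ≠ y) :
    x * log y - x * log x < y - x := by
  have hne : y / x ≠ 1 := fun h => hxy ((div_eq_one_iff_eq hx.ne').1 h).symm
  have h := mul_lt_mul_of_pos_left (log_lt_sub_one_of_pos (div_pos hy hx) hne) hx
  rwa [log_div hy.ne' hx.ne', mul_sub, mul_sub, mul_div_cancel₀ _ hx.ne', mul_one] at h

theorem sum_mul_log_le_sum_mul_log_self (hp : ∀ i ∈ s, 0 < p i) (hq : ∀ i ∈ s, 0 < q i)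
    (hpq : ∑ i ∈ s, q i ≤ ∑ i ∈ s, p i) :
    ∑ i ∈ s, p i * log (q i) ≤ ∑ i ∈ s, p i * log (p i) := by
  have h := sum_le_sum fun i hi => mul_log_sub_mul_log_le (hp i hi) (hq i hi)
  simp only [sum_sub_distrib] at h
  linarith

theorem sum_mul_log_lt_sum_mul_log_self (hp : ∀ i ∈ s, 0 < p i) (hq : ∀ i ∈ s, 0 < q i)
    (hpq : ∑ i ∈ s, q i ≤ ∑ i ∈ s, p i) (hne : ∃ i ∈ s, p i ≠ q i) :
    ∑ i ∈ s, p i * log (q i) < ∑ i ∈ s, p i * log (p i) := by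
  obtain ⟨j, hj, hpqj⟩ := hne
  have h := sum_lt_sum (fun i hi => mul_log_sub_mul_log_le (hp i hi) (hq i hi))
    ⟨j, hj, mul_log_sub_mul_log_lt (hp j hj) (hq j hj) hpqj⟩
  simp only [sum_sub_distrib] at h
  linarith

end Gibbs

section Tilted

variable {v : ℕ}

noncomputable def tiltedPartition (v : ℕ) (a : ℝ) : ℝ :=
  ∑ j ∈ range v, exp (-a * j / v)

noncomputable def tiltedMean (v : ℕ) (a : ℝ) : ℝ :=
  ∑ i ∈ range v, tiltedPMF v a i * i

lemma tiltedPMF_eq (v : ℕ) (a : ℝ) (i : ℕ) :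
    tiltedPMF v a i = exp (-a * i / v) / tiltedPartition v a :=
  rfl

lemma tiltedPartition_pos (hv : 0 < v) (a : ℝ) : 0 < tiltedPartition v a :=
  sum_pos (fun _ _ => exp_pos _) (nonempty_range_iff.2 hv.ne')

lemma tiltedPMF_pos (hv : 0 < v) (a : ℝ) (i : ℕ) : 0 < tiltedPMF v a i :=
  div_pos (exp_pos _) (tiltedPartition_pos hv a)

lemma sum_tiltedPMF (hv : 0 < v) (a : ℝ) : ∑ i ∈ range v, tiltedPMF v a i = 1 := by
  simp only [tiltedPMF_eq, ← sum_div]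
  exact div_self (tiltedPartition_pos hv a).ne'

lemma log_tiltedPMF (hv : 0 < v) (a : ℝ) (i : ℕ) :
    log (tiltedPMF v a i) = -a * i / v - log (tiltedPartition v a) := by
  rw [tiltedPMF_eq, log_div (exp_pos _).ne' (tiltedPartition_pos hv a).ne', log_exp]

lemma neg_sum_tiltedPMF_mul_log_tiltedPMF (hv : 0 < v) (a b : ℝ) :
    -∑ i ∈ range v, tiltedPMF v b i * log (tiltedPMF v a i)
      = a / v * tiltedMean v b + log (tiltedPartition v a) := by
  have h : ∀ i ∈ range v, tiltedPMF v b i * log (tiltedPMF v a i)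
      = -(a / v * (tiltedPMF v b i * i)) - tiltedPMF v b i * log (tiltedPartition v a) :=
    fun i _ => by rw [log_tiltedPMF hv]; ring
  rw [sum_congr rfl h, sum_sub_distrib, sum_neg_distrib, ← sum_mul, sum_tiltedPMF hv, tiltedMean,
    mul_sum]
  ring

lemma tiltedEntropy_eq (hv : 0 < v) (a : ℝ) :
    tiltedEntropy v a = a / v * tiltedMean v a + log (tiltedPartition v a) :=
  neg_sum_tiltedPMF_mul_log_tiltedPMF hv a a

lemma tiltedEntropy_le_mul_tiltedMean_add_log_tiltedPartition (hv : 0 < v) (a b : ℝ) :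
    tiltedEntropy v b ≤ a / v * tiltedMean v b + log (tiltedPartition v a) := by
  rw [← neg_sum_tiltedPMF_mul_log_tiltedPMF hv, tiltedEntropy, neg_le_neg_iff]
  exact sum_mul_log_le_sum_mul_log_self (fun i _ => tiltedPMF_pos hv b i)
    (fun i _ => tiltedPMF_pos hv a i) (by rw [sum_tiltedPMF hv, sum_tiltedPMF hv])

lemma tiltedMean_antitone (hv : 0 < v) : Antitone (tiltedMean v) := by
  intro a b hab
  rcases hab.eq_or_lt with rfl | hlt
  · rfl
  have hb := tiltedEntropy_le_mul_tiltedMean_add_log_tiltedPartition hv a b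
  have ha := tiltedEntropy_le_mul_tiltedMean_add_log_tiltedPartition hv b a
  rw [tiltedEntropy_eq hv] at ha hb
  -- Adding the Gibbs inequalities for `(a, b)` and `(b, a)` cancels the partition functions.
  have hprod : (b / v - a / v) * (tiltedMean v b - tiltedMean v a) ≤ 0 := by
    linear_combination ha + hb
  have hvpos : (0 : ℝ) < v := by exact_mod_cast hv
  exact sub_nonpos.1 (nonpos_of_mul_nonpos_right hprod
    (by rw [← sub_div]; exact div_pos (sub_pos.2 hlt) hvpos))

lemma tiltedEntropy_antitoneOn (hv : 0 < v) : AntitoneOn (tiltedEntropy v) (Set.Ici 0) := by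
  intro a ha b _ hab
  have ha : 0 ≤ a := ha
  calc tiltedEntropy v b
      ≤ a / v * tiltedMean v b + log (tiltedPartition v a) :=
        tiltedEntropy_le_mul_tiltedMean_add_log_tiltedPartition hv a b
    _ ≤ a / v * tiltedMean v a + log (tiltedPartition v a) := by
        gcongr
        exact tiltedMean_antitone hv hab
    _ = tiltedEntropy v a := (tiltedEntropy_eq hv a).symm

lemma entropyLoss_monotoneOn (hv : 0 < v) : MonotoneOn (entropyLoss v) (Set.Ici 0) :=
  fun _ ha _ hb hab => sub_le_sub_left (tiltedEntropy_antitoneOn hv ha hb hab) _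

lemma sum_tiltedPMF_mul_log_inv (hv : 0 < v) (a : ℝ) :
    ∑ i ∈ range v, tiltedPMF v a i * log (v : ℝ)⁻¹ = -log v := by
  rw [← sum_mul, sum_tiltedPMF hv, one_mul, log_inv]

lemma entropyLoss_nonneg (hv : 0 < v) (a : ℝ) : 0 ≤ entropyLoss v a := by
  have h := sum_mul_log_le_sum_mul_log_self (s := range v) (q := fun _ => (v : ℝ)⁻¹)
    (fun i _ => tiltedPMF_pos hv a i) (fun _ _ => by positivity)
    (by simp [sum_tiltedPMF hv, hv.ne'])
  rw [sum_tiltedPMF_mul_log_inv hv] at h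
  rw [entropyLoss, tiltedEntropy]
  linarith

lemma entropyLoss_pos (hv : 2 ≤ v) {a : ℝ} (ha : a ≠ 0) : 0 < entropyLoss v a := by
  have hv0 : 0 < v := by omega
  have hne : tiltedPMF v a 0 ≠ tiltedPMF v a 1 := by
    rw [tiltedPMF_eq, tiltedPMF_eq, Ne, div_left_inj' (tiltedPartition_pos hv0 a).ne', exp_eq_exp]
    simpa [eq_comm (a := (0 : ℝ)), ha] using hv0.ne'
  have h := sum_mul_log_lt_sum_mul_log_self (s := range v) (q := fun _ => (v : ℝ)⁻¹)
    (fun i _ => tiltedPMF_pos hv0 a i) (fun _ _ => by positivity)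
    (by simp [sum_tiltedPMF hv0, hv0.ne'])
    (by
      by_contra! h
      exact hne ((h 0 (mem_range.2 hv0)).trans (h 1 (mem_range.2 hv)).symm))
  rw [sum_tiltedPMF_mul_log_inv hv0] at h
  rw [entropyLoss, tiltedEntropy]
  linarith

lemma tiltedPMF_neg_mul_log (hv : 0 < v) {q : ℝ} (hq : 0 < q) (i : ℕ) :
    tiltedPMF v (-(v * log q)) i = q ^ i / ∑ j ∈ range v, q ^ j := by
  have hv' : (v : ℝ) ≠ 0 := by exact_mod_cast hv.ne'
  have hexp : ∀ k : ℕ, exp (-(-(v * log q)) * k / v) = q ^ k := fun k => by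
    rw [show -(-(v * log q)) * k / v = k * log q by field_simp, exp_nat_mul, exp_log hq]
  simp only [tiltedPMF, hexp]

end Tilted

section ProductEntropy

variable {ι α : Type*} [Fintype ι] [DecidableEq ι] {s : ι → Finset α} {r : ι → α → ℝ}

lemma sum_piFinset_prod_mul_apply (hr : ∀ t, ∑ i ∈ s t, r t i = 1) (t : ι) (f : α → ℝ) :
    ∑ y ∈ Fintype.piFinset s, (∏ u, r u (y u)) * f (y t) = ∑ i ∈ s t, r t i * f i := by
  -- Absorbing `f` into the `t`-th factor makes the summand a product of one-dimensional terms.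
  let g : ι → α → ℝ := fun u i => r u i * if u = t then f i else 1
  have hprod : ∀ y : ι → α, (∏ u, r u (y u)) * f (y t) = ∏ u, g u (y u) := fun y => by
    simp only [g, prod_mul_distrib, prod_ite_eq', mem_univ, if_true]
  have hsum : ∀ u, ∑ i ∈ s u, g u i = if u = t then ∑ i ∈ s t, r t i * f i else 1 := fun u => by
    by_cases h : u = t
    · subst h; simp [g]
    · simp [g, h, hr u]
  simp only [hprod, ← prod_univ_sum, hsum, prod_ite_eq', mem_univ, if_true]

lemma sum_piFinset_prod_mul_log_prod (hpos : ∀ t, ∀ i ∈ s t, 0 < r t i)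
    (hr : ∀ t, ∑ i ∈ s t, r t i = 1) :
    ∑ y ∈ Fintype.piFinset s, (∏ t, r t (y t)) * log (∏ t, r t (y t))
      = ∑ t, ∑ i ∈ s t, r t i * log (r t i) := by
  have hlog : ∀ y ∈ Fintype.piFinset s, (∏ t, r t (y t)) * log (∏ t, r t (y t))
      = ∑ t, (∏ u, r u (y u)) * log (r t (y t)) := fun y hy => by
    rw [log_prod fun t _ => (hpos t (y t) (Fintype.mem_piFinset.1 hy t)).ne', mul_sum]
  rw [sum_congr rfl hlog, sum_comm]
  exact sum_congr rfl fun t _ => sum_piFinset_prod_mul_apply hr t fun i => log (r t i)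

end ProductEntropy

section GeometricModel

variable {d : ℕ} {q : Fin d → ℝ} {v : Fin d → ℕ}

lemma validMass_eq_prod_mul_geom_sum (q : Fin d → ℝ) (v : Fin d → ℕ) :
    validMass q v = ∏ t, (1 - q t) * ∑ i ∈ range (v t), q t ^ i := by
  simp only [mul_sum, prod_univ_sum]
  rfl

lemma validMass_eq_prod (q : Fin d → ℝ) (v : Fin d → ℕ) :
    validMass q v = ∏ t, (1 - q t ^ v t) := by
  simp only [validMass_eq_prod_mul_geom_sum, mul_comm (1 - q _), geom_sum_mul_neg]

lemma pow_le_of_one_sub_le_validMass {ε : ℝ} (hq0 : ∀ t, 0 ≤ q t) (hq1 : ∀ t, q t ≤ 1)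
    (hmass : 1 - ε ≤ validMass q v) (t : Fin d) : q t ^ v t ≤ ε := by
  have hfac0 : ∀ s, 0 ≤ 1 - q s ^ v s := fun s => sub_nonneg.2 (pow_le_one₀ (hq0 s) (hq1 s))
  have hfac1 : ∀ s, 1 - q s ^ v s ≤ 1 := fun s => sub_le_self _ (pow_nonneg (hq0 s) _)
  have hle : validMass q v ≤ 1 - q t ^ v t := by
    rw [validMass_eq_prod, ← mul_prod_erase univ _ (mem_univ t)]
    exact mul_le_of_le_one_right (hfac0 t)
      (prod_le_one (fun s _ => hfac0 s) fun s _ => hfac1 s)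
  linarith

lemma geomProd_div_validMass (hq : ∀ t, 0 < q t ∧ q t < 1) (hv : ∀ t, 0 < v t)
    (y : Fin d → ℕ) :
    geomProd q y / validMass q v = ∏ t, tiltedPMF (v t) (-(v t * log (q t))) (y t) := by
  rw [validMass_eq_prod_mul_geom_sum, geomProd, ← prod_div_distrib]
  refine prod_congr rfl fun t _ => ?_
  rw [tiltedPMF_neg_mul_log (hv t) (hq t).1,
    mul_div_mul_left _ _ (sub_ne_zero.2 (hq t).2.ne')]

lemma condEntropy_eq_sum_tiltedEntropy (hq : ∀ t, 0 < q t ∧ q t < 1) (hv : ∀ t, 0 < v t) :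
    condEntropy q v = ∑ t, tiltedEntropy (v t) (-(v t * log (q t))) := by
  rw [condEntropy, sum_congr rfl fun y _ => by rw [geomProd_div_validMass hq hv], validSet,
    sum_piFinset_prod_mul_log_prod (r := fun t => tiltedPMF (v t) (-(v t * log (q t))))
      (fun t i _ => tiltedPMF_pos (hv t) _ i) fun t => sum_tiltedPMF (hv t) _,
    ← sum_neg_distrib]
  rfl

lemma card_validSet (v : Fin d → ℕ) : (validSet v).card = ∏ t, v t := by
  simp [validSet]

lemma diversity_eq_exp_neg_sum_entropyLoss (hq : ∀ t, 0 < q t ∧ q t < 1) (hv : ∀ t, 0 < v t) :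
    diversity q v = exp (-∑ t, entropyLoss (v t) (-(v t * log (q t)))) := by
  have hcard : ((validSet v).card : ℝ) = exp (∑ t, log (v t)) := by
    rw [exp_sum, card_validSet]
    push_cast
    exact prod_congr rfl fun t _ => (exp_log (by exact_mod_cast hv t)).symm
  rw [diversity, hcard, condEntropy_eq_sum_tiltedEntropy hq hv, ← exp_sub]
  congr 1
  simp only [entropyLoss, sum_sub_distrib]
  ring

end GeometricModel

theorem diversity_le_exp_neg_branching_general (d : ℕ)
    (q : Fin d → ℝ) (hq : ∀ t, 0 < q t ∧ q t < 1)
    (v : Fin d → ℕ) (hv : ∀ t, 1 ≤ v t)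
    (N : ℕ) (hN : 2 ≤ N) (hvN : ∀ t, v t ≤ N)
    (ε : ℝ) (hε : 0 < ε ∧ ε < 1)
    (m : ℕ) (hm : m = (Finset.univ.filter fun t : Fin d => 2 ≤ v t).card)
    (c : ℝ)
    (hc : c = (Finset.Icc 2 N).inf' (Finset.nonempty_Icc.mpr hN)
        (fun w => entropyLoss w (Real.log (1 / ε)))) :
    0 < c ∧ (1 - ε ≤ validMass q v → diversity q v ≤ Real.exp (-(m : ℝ) * c)) := by
  have hlog_pos : 0 < log (1 / ε) := log_pos (one_lt_one_div hε.1 hε.2)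
  refine ⟨hc ▸ (lt_inf'_iff _).2 fun w hw => entropyLoss_pos (mem_Icc.1 hw).1 hlog_pos.ne',
    fun hmass => ?_⟩
  have hc_le : ∀ t, 2 ≤ v t → c ≤ entropyLoss (v t) (log (1 / ε)) :=
    fun t ht => hc ▸ inf'_le _ (mem_Icc.2 ⟨ht, hvN t⟩)
  have htilt : ∀ t, log (1 / ε) ≤ -(v t * log (q t)) := fun t => by
    have h := log_le_log (pow_pos (hq t).1 _)
      (pow_le_of_one_sub_le_validMass (fun s => (hq s).1.le) (fun s => (hq s).2.le) hmass t)
    rw [log_pow] at h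
    rw [one_div, log_inv]
    linarith
  rw [diversity_eq_exp_neg_sum_entropyLoss hq hv, exp_le_exp, neg_mul, neg_le_neg_iff, hm,
    ← nsmul_eq_mul]
  calc _ ≤ ∑ t ∈ univ.filter (fun t => 2 ≤ v t), entropyLoss (v t) (-(v t * log (q t))) :=
        card_nsmul_le_sum _ _ _ fun t ht => (hc_le t (mem_filter.1 ht).2).trans
          (entropyLoss_monotoneOn (hv t) hlog_pos.le (hlog_pos.le.trans (htilt t)) (htilt t))
    _ ≤ ∑ t, entropyLoss (v t) (-(v t * log (q t))) :=
        sum_le_sum_of_subset_of_nonneg (filter_subset _ _) fun t _ _ => entropyLoss_nonneg (hv t) _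

/-- Exponential diversity loss in branching length: in the product geometric model, with
`m = |{t : v_t ≥ 2}|`, an integer `N ≥ 2` bounding all `v_t`, `ε ∈ (0,1)`, and
`c = min_{2 ≤ v ≤ N} Δ_v(ln(1/ε))`, we have `c > 0`, and if `P(V) ≥ 1 − ε` then
`Div(P) ≤ exp(−m·c)`. -/
theorem diversity_le_exp_neg_branching (d : ℕ) (hd : 1 ≤ d)
    (q : Fin d → ℝ) (hq : ∀ t, 0 < q t ∧ q t < 1)
    (v : Fin d → ℕ) (hv : ∀ t, 1 ≤ v t)
    (N : ℕ) (hN : 2 ≤ N) (hvN : ∀ t, v t ≤ N)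
    (ε : ℝ) (hε : 0 < ε ∧ ε < 1)
    (m : ℕ) (hm : m = (Finset.univ.filter fun t : Fin d => 2 ≤ v t).card)
    (c : ℝ)
    (hc : c = (Finset.Icc 2 N).inf' (Finset.nonempty_Icc.mpr hN)
        (fun w => entropyLoss w (Real.log (1 / ε)))) :
    0 < c ∧ (1 - ε ≤ validMass q v → diversity q v ≤ Real.exp (-(m : ℝ) * c)) :=
  diversity_le_exp_neg_branching_general d q hq v hv N hN hvN ε hε m hm c hc
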